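/- If persistence diagrams D₁ and D₂ are orthogonal, then the bottleneck distance satisfies W_∞(D₁, D₂) = max(W_∞(D₁, ∅), W_∞(D₂, ∅)), where ∅ denotes the empty diagram. -/

import Mathlib

open MeasureTheory Filter

noncomputable section

/-- `D` is a persistence diagram: every feature is born before it dies. -/
def IsDiagram (D : Multiset (ℝ × ℝ)) : Prop := ∀ p ∈ D, p.1 < p.2

/-- Supremum norm distance on ℝ². -/
def distSup (x y : ℝ × ℝ) : ℝ := max |x.1 - y.1| |x.2 - y.2|

/-- `M` is a matching between `D₁` and `D₂`: a bijective pairing between the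
diagrams augmented with finitely many diagonal points. -/
def IsMatching (D₁ D₂ : Multiset (ℝ × ℝ)) (M : Multiset ((ℝ × ℝ) × (ℝ × ℝ))) : Prop :=
  ∃ E₁ E₂ : Multiset (ℝ × ℝ), (∀ x ∈ E₁, x.1 = x.2) ∧ (∀ y ∈ E₂, y.1 = y.2) ∧
    M.map Prod.fst = D₁ + E₁ ∧ M.map Prod.snd = D₂ + E₂

/-- The bottleneck cost of a matching: the largest sup-norm distance within a pair. -/
def costSup (M : Multiset ((ℝ × ℝ) × (ℝ × ℝ))) : ℝ :=
  sSup (insert 0 {c | ∃ pr ∈ M, c = distSup pr.1 pr.2})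

/-- Bottleneck distance between persistence diagrams. -/
def bottleneck (D₁ D₂ : Multiset (ℝ × ℝ)) : ℝ :=
  sInf {c | ∃ M, IsMatching D₁ D₂ M ∧ c = costSup M}

/-- `p`-Wasserstein distance between persistence diagrams. -/
def wasserstein (p : ℝ) (D₁ D₂ : Multiset (ℝ × ℝ)) : ℝ :=
  sInf {c | ∃ M, IsMatching D₁ D₂ M ∧
    c = ((M.map fun pr => distSup pr.1 pr.2 ^ p).sum) ^ (1 / p)}

/-- The trivial matching: each point of either diagram is paired with its closest
diagonal point. -/
def trivMatch (D₁ D₂ : Multiset (ℝ × ℝ)) : Multiset ((ℝ × ℝ) × (ℝ × ℝ)) :=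
  (D₁.map fun x => (x, ((x.1 + x.2) / 2, (x.1 + x.2) / 2))) +
  (D₂.map fun y => (((y.1 + y.2) / 2, (y.1 + y.2) / 2), y))

/-! The trivial matching gives the upper bound. For the lower bound, orthogonality puts every
point of one diagram at least as far (in the sup metric) from every point of the other diagram
as from the diagonal, so in any matching each point pays at least its distance to the diagonal. -/

section Cost

variable {M N : Multiset ((ℝ × ℝ) × (ℝ × ℝ))}

lemma finite_distSup_values (M : Multiset ((ℝ × ℝ) × (ℝ × ℝ))) :
    {c | ∃ pr ∈ M, c = distSup pr.1 pr.2}.Finite :=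
  (M.finite_toSet.image fun pr => distSup pr.1 pr.2).subset
    (by rintro c ⟨pr, hpr, rfl⟩; exact ⟨pr, hpr, rfl⟩)

lemma costSup_nonneg (M : Multiset ((ℝ × ℝ) × (ℝ × ℝ))) : 0 ≤ costSup M :=
  le_csSup ((finite_distSup_values M).insert 0).bddAbove (Set.mem_insert _ _)

lemma distSup_le_costSup {pr : (ℝ × ℝ) × (ℝ × ℝ)} (h : pr ∈ M) :
    distSup pr.1 pr.2 ≤ costSup M :=
  le_csSup ((finite_distSup_values M).insert 0).bddAbove
    (Set.mem_insert_of_mem _ ⟨pr, h, rfl⟩)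

lemma costSup_le_iff {B : ℝ} :
    costSup M ≤ B ↔ 0 ≤ B ∧ ∀ pr ∈ M, distSup pr.1 pr.2 ≤ B := by
  refine ⟨fun h => ⟨(costSup_nonneg M).trans h,
    fun pr hpr => (distSup_le_costSup hpr).trans h⟩, fun ⟨hB, h⟩ => ?_⟩
  refine csSup_le (Set.insert_nonempty _ _) ?_
  rintro c (rfl | ⟨pr, hpr, rfl⟩)
  exacts [hB, h pr hpr]

lemma costSup_add : costSup (M + N) = max (costSup M) (costSup N) := by
  refine le_antisymm (costSup_le_iff.2 ⟨(costSup_nonneg M).trans (le_max_left _ _), ?_⟩)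
    (max_le (costSup_le_iff.2 ⟨costSup_nonneg _, fun pr hpr => ?_⟩)
      (costSup_le_iff.2 ⟨costSup_nonneg _, fun pr hpr => ?_⟩))
  · rintro pr hpr
    rcases Multiset.mem_add.1 hpr with hpr | hpr
    · exact (distSup_le_costSup hpr).trans (le_max_left _ _)
    · exact (distSup_le_costSup hpr).trans (le_max_right _ _)
  · exact distSup_le_costSup (Multiset.mem_add.2 (Or.inl hpr))
  · exact distSup_le_costSup (Multiset.mem_add.2 (Or.inr hpr))

lemma distSup_comm (x y : ℝ × ℝ) : distSup x y = distSup y x := by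
  simp only [distSup, abs_sub_comm]

lemma costSup_map_swap (M : Multiset ((ℝ × ℝ) × (ℝ × ℝ))) :
    costSup (M.map Prod.swap) = costSup M := by
  refine le_antisymm (costSup_le_iff.2 ⟨costSup_nonneg M, ?_⟩)
    (costSup_le_iff.2 ⟨costSup_nonneg _, fun pr hpr => ?_⟩)
  · simp only [Multiset.mem_map, forall_exists_index, and_imp]
    rintro _ pr hpr rfl
    exact (distSup_comm _ _).trans_le (distSup_le_costSup hpr)
  · exact (distSup_comm _ _).trans_le (distSup_le_costSup (Multiset.mem_map_of_mem Prod.swap hpr))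

end Cost

section Matching

variable {D₁ D₂ : Multiset (ℝ × ℝ)} {M : Multiset ((ℝ × ℝ) × (ℝ × ℝ))}

lemma IsMatching.swap (h : IsMatching D₁ D₂ M) : IsMatching D₂ D₁ (M.map Prod.swap) := by
  obtain ⟨E₁, E₂, hE₁, hE₂, h₁, h₂⟩ := h
  exact ⟨E₂, E₁, hE₂, hE₁, by rwa [Multiset.map_map], by rwa [Multiset.map_map]⟩

lemma IsMatching.exists_partner (h : IsMatching D₁ D₂ M) {x : ℝ × ℝ} (hx : x ∈ D₁) :
    ∃ y, (x, y) ∈ M ∧ (y ∈ D₂ ∨ y.1 = y.2) := by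
  obtain ⟨E₁, E₂, -, hE₂, h₁, h₂⟩ := h
  obtain ⟨⟨x', y⟩, hpr, rfl⟩ := Multiset.mem_map.1 (h₁ ▸ Multiset.mem_add.2 (Or.inl hx))
  have hy : y ∈ D₂ + E₂ := h₂ ▸ Multiset.mem_map_of_mem Prod.snd hpr
  exact ⟨y, hpr, (Multiset.mem_add.1 hy).imp_right (hE₂ y)⟩

lemma trivMatch_isMatching (D₁ D₂ : Multiset (ℝ × ℝ)) :
    IsMatching D₁ D₂ (trivMatch D₁ D₂) := by
  refine ⟨D₂.map fun y => ((y.1 + y.2) / 2, (y.1 + y.2) / 2),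
    D₁.map fun x => ((x.1 + x.2) / 2, (x.1 + x.2) / 2), ?_, ?_, ?_, ?_⟩
  · simp only [Multiset.mem_map]
    rintro _ ⟨y, -, rfl⟩
    rfl
  · simp only [Multiset.mem_map]
    rintro _ ⟨x, -, rfl⟩
    rfl
  · simp [trivMatch, Multiset.map_map]
  · simp [trivMatch, Multiset.map_map, add_comm]

lemma trivMatch_eq_add (D₁ D₂ : Multiset (ℝ × ℝ)) :
    trivMatch D₁ D₂ = trivMatch D₁ 0 + (trivMatch D₂ 0).map Prod.swap := by
  simp [trivMatch, Multiset.map_map]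

lemma bottleneck_le_costSup (hM : IsMatching D₁ D₂ M) : bottleneck D₁ D₂ ≤ costSup M :=
  csInf_le ⟨0, by rintro c ⟨M, -, rfl⟩; exact costSup_nonneg M⟩ ⟨M, hM, rfl⟩

lemma le_bottleneck {c : ℝ} (h : ∀ M, IsMatching D₁ D₂ M → c ≤ costSup M) :
    c ≤ bottleneck D₁ D₂ :=
  le_csInf ⟨_, trivMatch D₁ D₂, trivMatch_isMatching D₁ D₂, rfl⟩
    (by rintro c ⟨M, hM, rfl⟩; exact h M hM)

lemma bottleneck_comm (D₁ D₂ : Multiset (ℝ × ℝ)) : bottleneck D₁ D₂ = bottleneck D₂ D₁ := by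
  have key : ∀ D₁ D₂, bottleneck D₁ D₂ ≤ bottleneck D₂ D₁ := fun _ _ =>
    le_bottleneck fun M hM => (bottleneck_le_costSup hM.swap).trans (costSup_map_swap M).le
  exact le_antisymm (key _ _) (key _ _)

end Matching

lemma distSup_midpoint (p : ℝ × ℝ) :
    distSup p ((p.1 + p.2) / 2, (p.1 + p.2) / 2) = |p.2 - p.1| / 2 := by
  rw [distSup, show p.1 - (p.1 + p.2) / 2 = -((p.2 - p.1) / 2) by ring,
    show p.2 - (p.1 + p.2) / 2 = (p.2 - p.1) / 2 by ring, abs_neg, max_self, abs_div,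
    abs_two]

lemma abs_sub_div_two_le_distSup_of_diag {p q : ℝ × ℝ} (hq : q.1 = q.2) :
    |p.2 - p.1| / 2 ≤ distSup p q := by
  have h₁ : |p.1 - q.2| ≤ distSup p q := hq ▸ le_max_left _ _
  have h₂ : |p.2 - q.2| ≤ distSup p q := le_max_right _ _
  have := abs_sub_le p.2 q.2 p.1
  rw [abs_sub_comm q.2] at this
  linarith

lemma abs_sub_div_two_le_distSup_of_disjoint {x y : ℝ × ℝ} (hx : x.1 < x.2) (hy : y.1 < y.2)
    (h : Set.Ioo x.1 x.2 ∩ Set.Ioo y.1 y.2 = ∅) :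
    |x.2 - x.1| / 2 ≤ distSup x y := by
  rw [Set.Ioo_inter_Ioo, Set.Ioo_eq_empty_iff, not_lt] at h
  rw [abs_of_pos (sub_pos.2 hx)]
  have h₁ : |x.1 - y.1| ≤ distSup x y := le_max_left _ _
  have h₂ : |x.2 - y.2| ≤ distSup x y := le_max_right _ _
  have := neg_abs_le (x.1 - y.1)
  have := le_abs_self (x.2 - y.2)
  rcases min_le_iff.1 h with h | h <;> rcases le_max_iff.1 h with h | h <;> linarith

lemma costSup_trivMatch_zero_le {D₁ D₂ : Multiset (ℝ × ℝ)} {M : Multiset ((ℝ × ℝ) × (ℝ × ℝ))}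
    (hM : IsMatching D₁ D₂ M) (hfar : ∀ x ∈ D₁, ∀ y ∈ D₂, |x.2 - x.1| / 2 ≤ distSup x y) :
    costSup (trivMatch D₁ 0) ≤ costSup M := by
  refine costSup_le_iff.2 ⟨costSup_nonneg M, ?_⟩
  simp only [trivMatch, Multiset.map_zero, add_zero, Multiset.mem_map, forall_exists_index,
    and_imp]
  rintro _ x hx rfl
  obtain ⟨y, hxy, hy | hy⟩ := hM.exists_partner hx
  all_goals
    rw [distSup_midpoint]
    refine le_trans ?_ (distSup_le_costSup hxy)
  exacts [hfar x hx y hy, abs_sub_div_two_le_distSup_of_diag hy]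

lemma bottleneck_zero_right (D : Multiset (ℝ × ℝ)) : bottleneck D 0 = costSup (trivMatch D 0) :=
  le_antisymm (bottleneck_le_costSup (trivMatch_isMatching D 0))
    (le_bottleneck fun _ hM => costSup_trivMatch_zero_le hM (by simp))

theorem bottleneck_of_orthogonal
    (D₁ D₂ : Multiset (ℝ × ℝ)) (hD₁ : IsDiagram D₁) (hD₂ : IsDiagram D₂)
    (horth : ∀ p₁ ∈ D₁, ∀ p₂ ∈ D₂, Set.Ioo p₁.1 p₁.2 ∩ Set.Ioo p₂.1 p₂.2 = ∅) :
    bottleneck D₁ D₂ = max (bottleneck D₁ 0) (bottleneck D₂ 0) := by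
  have hfar₁ : ∀ x ∈ D₁, ∀ y ∈ D₂, |x.2 - x.1| / 2 ≤ distSup x y := fun x hx y hy =>
    abs_sub_div_two_le_distSup_of_disjoint (hD₁ x hx) (hD₂ y hy) (horth x hx y hy)
  have hfar₂ : ∀ y ∈ D₂, ∀ x ∈ D₁, |y.2 - y.1| / 2 ≤ distSup y x := fun y hy x hx =>
    abs_sub_div_two_le_distSup_of_disjoint (hD₂ y hy) (hD₁ x hx)
      (Set.inter_comm _ _ ▸ horth x hx y hy)
  rw [bottleneck_zero_right, bottleneck_zero_right]
  refine le_antisymm ?_ (max_le ?_ ?_)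
  · calc bottleneck D₁ D₂ ≤ costSup (trivMatch D₁ D₂) :=
          bottleneck_le_costSup (trivMatch_isMatching D₁ D₂)
      _ = max (costSup (trivMatch D₁ 0)) (costSup (trivMatch D₂ 0)) := by
          rw [trivMatch_eq_add, costSup_add, costSup_map_swap]
  · exact le_bottleneck fun _ hM => costSup_trivMatch_zero_le hM hfar₁
  · rw [bottleneck_comm]
    exact le_bottleneck fun _ hM => costSup_trivMatch_zero_le hM hfar₂
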